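/- If β in (1,2) is a univoque Parry number, i.e., 1 has a unique representation 1 = Σ_{n≥1} s_n β^{−n} with s_n ∈ {0,1} and this representation (the greedy expansion) is eventually periodic, and β is an algebraic integer, then β is a unit: the constant term of its minimal polynomial over ℤ is ±1. -/

import Mathlib

/-!
Let `s` be the unique expansion of `1`, periodic with period `T` from index `N` on, `N` minimal.

If `N = M + 1`, then `s M ≠ s (M + T)`. Clearing denominators in
`1 = ∑_{n ≤ M} s n / β^(n+1) + y / β^N` and `y = ∑_{k < T} s (N + k) / β^(k+1) + y / β^T`
gives an integer polynomial vanishing at `β` with constant term `s M - s (M + T) = ±1`; the minimal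
polynomial divides it.

If `N = 0`, let `j` be the last zero digit in the first period (there is one, as `β ≠ 2`). The digits
after `j` are `T - 1 - j` ones followed by `s` itself, so their value `y` is at least `1` because
`β ≤ 2`. Changing the digit at `j` to `1` and continuing with a greedy expansion of `y - 1` gives a
second expansion of `1`.
-/

open Finset Polynomial Filter Topology

noncomputable def expansionValue (β : ℝ) (s : ℕ → ℕ) : ℝ :=
  ∑' n, (s n : ℝ) / β ^ (n + 1)

section Expansion

variable {β : ℝ}

lemma hasSum_one_div_pow_succ (h1 : 1 < β) :
    HasSum (fun n : ℕ => 1 / β ^ (n + 1)) (1 / (β - 1)) := by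
  have hterm : (fun n : ℕ => 1 / β ^ (n + 1)) = fun n => β⁻¹ * β⁻¹ ^ n := by
    ext n
    rw [one_div, ← inv_pow, pow_succ']
  have hsum : 1 / (β - 1) = β⁻¹ * (1 - β⁻¹)⁻¹ := by field_simp
  rw [hterm, hsum]
  exact (hasSum_geometric_of_lt_one (inv_nonneg.2 (zero_le_one.trans h1.le))
    (inv_lt_one_of_one_lt₀ h1)).mul_left β⁻¹

lemma summable_digits (h1 : 1 < β) {s : ℕ → ℕ} (hs : ∀ n, s n ≤ 1) :
    Summable (fun n => (s n : ℝ) / β ^ (n + 1)) :=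
  (hasSum_one_div_pow_succ h1).summable.of_nonneg_of_le (fun n => by positivity)
    (fun n => div_le_div_of_nonneg_right (by exact_mod_cast hs n) (by positivity))

lemma expansionValue_le (h1 : 1 < β) {s : ℕ → ℕ} (hs : ∀ n, s n ≤ 1) :
    expansionValue β s ≤ 1 / (β - 1) :=
  hasSum_le (fun n => div_le_div_of_nonneg_right (by exact_mod_cast hs n) (by positivity))
    (summable_digits h1 hs).hasSum (hasSum_one_div_pow_succ h1)

lemma expansionValue_const_one (h1 : 1 < β) : expansionValue β (fun _ => 1) = 1 / (β - 1) := by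
  simpa [expansionValue] using (hasSum_one_div_pow_succ h1).tsum_eq

lemma expansionValue_eq_sum_add (h1 : 1 < β) {s : ℕ → ℕ} (hs : ∀ n, s n ≤ 1) (k : ℕ) :
    expansionValue β s = ∑ n ∈ range k, (s n : ℝ) / β ^ (n + 1) +
      expansionValue β (fun m => s (m + k)) / β ^ k := by
  rw [expansionValue, ← (summable_digits h1 hs).sum_add_tsum_nat_add k, expansionValue,
    ← tsum_div_const]
  congr 1
  refine tsum_congr fun m => ?_
  rw [div_div, ← pow_add, add_right_comm]

lemma one_le_sum_one_div_pow_add (hβ : 0 < β) (h2 : β ≤ 2) (k : ℕ) :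
    1 ≤ ∑ i ∈ range k, 1 / β ^ (i + 1) + 1 / β ^ k := by
  induction k with
  | zero => simp
  | succ k ih =>
    have : 1 / β ^ k ≤ 1 / β ^ (k + 1) + 1 / β ^ (k + 1) := by
      rw [← add_div, pow_succ, div_le_div_iff₀ (by positivity) (by positivity)]
      nlinarith [pow_pos hβ k]
    rw [sum_range_succ]
    linarith

open Classical in
noncomputable def greedyRem (β x : ℝ) : ℕ → ℝ
  | 0 => x
  | n + 1 =>
    if 1 / β ^ (n + 1) ≤ greedyRem β x n then greedyRem β x n - 1 / β ^ (n + 1)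
    else greedyRem β x n

open Classical in
noncomputable def greedyDigit (β x : ℝ) (n : ℕ) : ℕ :=
  if 1 / β ^ (n + 1) ≤ greedyRem β x n then 1 else 0

lemma greedyDigit_le_one (x : ℝ) (n : ℕ) : greedyDigit β x n ≤ 1 := by
  unfold greedyDigit
  split_ifs <;> simp

lemma greedyRem_succ (x : ℝ) (n : ℕ) :
    greedyRem β x (n + 1) = greedyRem β x n - greedyDigit β x n / β ^ (n + 1) := by
  rw [greedyRem, greedyDigit]
  split_ifs <;> simp

lemma greedyRem_mem_Icc (h1 : 1 < β) (h2 : β ≤ 2) {x : ℝ} (hx0 : 0 ≤ x)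
    (hx1 : x ≤ 1 / (β - 1)) (n : ℕ) :
    greedyRem β x n ∈ Set.Icc 0 (1 / ((β - 1) * β ^ n)) := by
  induction n with
  | zero => simpa [greedyRem] using And.intro hx0 hx1
  | succ n ih =>
    obtain ⟨h0, hle⟩ := ih
    have hβ1 : 0 < β - 1 := by linarith
    have hstep : 1 / ((β - 1) * β ^ n) - 1 / β ^ (n + 1) = 1 / ((β - 1) * β ^ (n + 1)) := by
      field_simp
      ring
    have hdigit : 1 / β ^ (n + 1) ≤ 1 / ((β - 1) * β ^ (n + 1)) :=
      one_div_le_one_div_of_le (by positivity) (mul_le_of_le_one_left (by positivity) (by linarith))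
    rw [greedyRem]
    split_ifs with h
    · exact ⟨by linarith, by linarith⟩
    · exact ⟨h0, by linarith⟩

lemma exists_expansionValue_eq (h1 : 1 < β) (h2 : β ≤ 2) {x : ℝ} (hx0 : 0 ≤ x)
    (hx1 : x ≤ 1 / (β - 1)) :
    ∃ u : ℕ → ℕ, (∀ n, u n ≤ 1) ∧ expansionValue β u = x := by
  refine ⟨greedyDigit β x, greedyDigit_le_one x, ?_⟩
  have hpartial : ∀ n, ∑ i ∈ range n, (greedyDigit β x i : ℝ) / β ^ (i + 1) =
      x - greedyRem β x n := by
    intro n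
    induction n with
    | zero => simp [greedyRem]
    | succ n ih =>
      rw [sum_range_succ, ih, greedyRem_succ]
      ring
  have hbound : Tendsto (fun n : ℕ => 1 / ((β - 1) * β ^ n)) atTop (𝓝 0) :=
    tendsto_const_nhds.div_atTop
      ((tendsto_pow_atTop_atTop_of_one_lt h1).const_mul_atTop (by linarith))
  have hrem : Tendsto (greedyRem β x) atTop (𝓝 0) :=
    squeeze_zero (fun n => (greedyRem_mem_Icc h1 h2 hx0 hx1 n).1)
      (fun n => (greedyRem_mem_Icc h1 h2 hx0 hx1 n).2) hbound
  refine ((hasSum_iff_tendsto_nat_of_nonneg (fun n => by positivity) x).2 ?_).tsum_eq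
  simpa [hpartial] using (tendsto_const_nhds (x := x)).sub hrem

lemma exists_expansionValue_eq_of_digit_eq_zero (h1 : 1 < β) (h2 : β ≤ 2) {s : ℕ → ℕ}
    (hs : ∀ n, s n ≤ 1) {j : ℕ} (hj : s j = 0)
    (htail : 1 ≤ expansionValue β (fun m => s (m + (j + 1)))) :
    ∃ t : ℕ → ℕ, (∀ n, t n ≤ 1) ∧ expansionValue β t = expansionValue β s ∧ t j = 1 := by
  set y := expansionValue β (fun m => s (m + (j + 1)))
  obtain ⟨u, hu, huy⟩ := exists_expansionValue_eq h1 h2 (x := y - 1) (by linarith)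
    (by linarith [expansionValue_le h1 (fun m => hs (m + (j + 1)))])
  set t : ℕ → ℕ := fun n => if n < j then s n else if n = j then 1 else u (n - (j + 1))
  have ht : ∀ n, t n ≤ 1 := fun n => by
    simp only [t]
    split_ifs
    exacts [hs n, le_rfl, hu _]
  have ht_tail : (fun m => t (m + (j + 1))) = u := funext fun m => by
    simp [t, show ¬ m + (j + 1) < j by omega, show m + (j + 1) ≠ j by omega]
  have ht_head : ∑ n ∈ range j, (t n : ℝ) / β ^ (n + 1) = ∑ n ∈ range j, (s n : ℝ) / β ^ (n + 1) :=
    sum_congr rfl fun n hn => by simp [t, mem_range.1 hn]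
  refine ⟨t, ht, ?_, by simp [t]⟩
  rw [expansionValue_eq_sum_add h1 ht (j + 1), expansionValue_eq_sum_add h1 hs (j + 1), ht_tail,
    huy, sum_range_succ, sum_range_succ, ht_head, hj]
  simp only [t, lt_irrefl, if_false, if_true]
  ring

lemma exists_digit_eq_zero_one_le_tail (h1 : 1 < β) (h2 : β < 2) {s : ℕ → ℕ}
    (hs : ∀ n, s n ≤ 1) (hs1 : expansionValue β s = 1) {T : ℕ} (hT : 1 ≤ T)
    (hper : Function.Periodic s T) :
    ∃ j, s j = 0 ∧ 1 ≤ expansionValue β (fun m => s (m + (j + 1))) := by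
  classical
  have hzero : ∃ i < T, s i = 0 := by
    by_contra! h
    have hone : s = fun _ => 1 := funext fun n => by
      have := h (n % T) (Nat.mod_lt _ hT)
      have := hs (n % T)
      rw [← hper.map_mod_nat]
      omega
    rw [hone, expansionValue_const_one h1, div_eq_one_iff_eq (by linarith)] at hs1
    linarith
  obtain ⟨i, hiT, hi⟩ := hzero
  set j := Nat.findGreatest (fun i => s i = 0) (T - 1)
  have hj : s j = 0 := Nat.findGreatest_spec (P := fun i => s i = 0) (by omega) hi
  have hjT : j < T := by
    have := Nat.findGreatest_le (P := fun i => s i = 0) (T - 1)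
    omega
  have hones : ∀ i < T - 1 - j, s (i + (j + 1)) = 1 := fun i hi => by
    have := Nat.findGreatest_is_greatest (P := fun i => s i = 0) (k := i + (j + 1)) (n := T - 1)
      (by omega) (by omega)
    have := hs (i + (j + 1))
    omega
  have hrest : (fun m => s (m + (T - 1 - j) + (j + 1))) = s := funext fun m => by
    rw [show m + (T - 1 - j) + (j + 1) = m + T by omega, hper]
  refine ⟨j, hj, ?_⟩
  rw [expansionValue_eq_sum_add h1 (fun m => hs _) (T - 1 - j), hrest, hs1,
    sum_congr rfl fun i hi => by rw [hones i (mem_range.1 hi)]]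
  push_cast
  exact one_le_sum_one_div_pow_add (by linarith) h2.le _

noncomputable def digitPoly (s : ℕ → ℕ) (k : ℕ) : ℤ[X] :=
  ∑ n ∈ range k, C (s n : ℤ) * X ^ (k - 1 - n)

lemma aeval_digitPoly (hβ : β ≠ 0) (s : ℕ → ℕ) (k : ℕ) :
    aeval β (digitPoly s k) = β ^ k * ∑ n ∈ range k, (s n : ℝ) / β ^ (n + 1) := by
  simp only [digitPoly, map_sum, map_mul, aeval_X, map_pow, mul_sum, map_natCast]
  refine sum_congr rfl fun n hn => ?_
  rw [show β ^ k = β ^ (k - 1 - n) * β ^ (n + 1) by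
    rw [← pow_add]; congr 1; have := mem_range.1 hn; omega]
  field_simp

lemma eval_zero_digitPoly (s : ℕ → ℕ) (k : ℕ) : (digitPoly s (k + 1)).eval 0 = s k := by
  rw [digitPoly, eval_finsetSum, sum_range_succ, sum_eq_zero fun n hn => ?_]
  · simp
  · simp [show k - n ≠ 0 by have := mem_range.1 hn; omega]

lemma exists_aeval_eq_zero_coeff_zero_eq_sub (h1 : 1 < β) {s : ℕ → ℕ}
    (hs : ∀ n, s n ≤ 1) (hs1 : expansionValue β s = 1) {M T : ℕ} (hT : 1 ≤ T)
    (hper : ∀ n, M + 1 ≤ n → s (n + T) = s n) :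
    ∃ Q : ℤ[X], aeval β Q = 0 ∧ Q.coeff 0 = s M - s (M + T) := by
  have hβ : β ≠ 0 := by positivity
  set y := expansionValue β (fun m => s (m + (M + 1)))
  have hA : aeval β (digitPoly s (M + 1)) = β ^ (M + 1) - y := by
    have hsplit := expansionValue_eq_sum_add h1 hs (M + 1)
    rw [hs1] at hsplit
    rw [aeval_digitPoly hβ]
    linear_combination (-β ^ (M + 1)) * hsplit - div_mul_cancel₀ y (pow_ne_zero (M + 1) hβ)
  have hB : aeval β (digitPoly (fun m => s (m + (M + 1))) T) = (β ^ T - 1) * y := by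
    have hsplit := expansionValue_eq_sum_add h1 (fun m => hs (m + (M + 1))) T
    have hrest : (fun m => s (m + T + (M + 1))) = fun m => s (m + (M + 1)) := funext fun m => by
      rw [show m + T + (M + 1) = m + (M + 1) + T by omega, hper _ (by omega)]
    rw [hrest] at hsplit
    rw [aeval_digitPoly hβ]
    linear_combination (-β ^ T) * hsplit - div_mul_cancel₀ y (pow_ne_zero T hβ)
  obtain ⟨T, rfl⟩ : ∃ T', T = T' + 1 := ⟨T - 1, by omega⟩
  refine ⟨(X ^ (M + 1) - digitPoly s (M + 1)) * (X ^ (T + 1) - 1) -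
    digitPoly (fun m => s (m + (M + 1))) (T + 1), ?_, ?_⟩
  · simp only [map_sub, map_mul, map_pow, aeval_X, map_one, hA, hB]
    ring
  · rw [coeff_zero_eq_eval_zero]
    simp only [eval_sub, eval_mul, eval_pow, eval_X, eval_one, eval_zero_digitPoly]
    rw [show T + (M + 1) = M + (T + 1) by omega]
    simp

end Expansion

lemma isUnit_coeff_zero_minpoly_of_aeval_eq_zero {R S : Type*} [CommRing R] [IsDomain R]
    [IsIntegrallyClosed R] [CommRing S] [IsDomain S] [Algebra R S] [Module.IsTorsionFree R S]
    {x : S} (hx : IsIntegral R x) {Q : R[X]} (hQ : aeval x Q = 0) (hQ0 : IsUnit (Q.coeff 0)) :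
    IsUnit ((minpoly R x).coeff 0) := by
  obtain ⟨P, rfl⟩ := minpoly.isIntegrallyClosed_dvd hx hQ
  rw [mul_coeff_zero] at hQ0
  exact isUnit_of_mul_isUnit_left hQ0

lemma periodic_or_exists_ne_of_eventually_periodic {α : Type*} {s : ℕ → α} {T : ℕ} :
    ∀ {N : ℕ}, (∀ n, N ≤ n → s (n + T) = s n) →
      Function.Periodic s T ∨ ∃ M, s (M + T) ≠ s M ∧ ∀ n, M + 1 ≤ n → s (n + T) = s n
  | 0, h => Or.inl fun n => h n n.zero_le
  | N + 1, h => by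
    by_cases hN : s (N + T) = s N
    · refine periodic_or_exists_ne_of_eventually_periodic (N := N) fun n (hn : N ≤ n) => ?_
      rcases hn.eq_or_lt with rfl | hn
      exacts [hN, h n hn]
    · exact Or.inr ⟨N, hN, h⟩

/-- A univoque Parry number in (1,2) which is an algebraic integer is a unit:
the constant term of its minimal polynomial over ℤ is ±1. -/
theorem univoque_parry_is_unit (β : ℝ) (h1 : 1 < β) (h2 : β < 2)
    (hint : IsIntegral ℤ β)
    (huniv : ∃! s : ℕ → ℕ, (∀ n, s n ≤ 1) ∧ ∑' n : ℕ, (s n : ℝ) / β ^ (n + 1) = 1)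
    (hparry : ∀ s : ℕ → ℕ,
      ((∀ n, s n ≤ 1) ∧ ∑' n : ℕ, (s n : ℝ) / β ^ (n + 1) = 1) →
      ∃ N T, 1 ≤ T ∧ ∀ n, N ≤ n → s (n + T) = s n) :
    (minpoly ℤ β).coeff 0 = 1 ∨ (minpoly ℤ β).coeff 0 = -1 := by
  obtain ⟨s, ⟨hs, hs1⟩, huniq⟩ := huniv
  obtain ⟨N, T, hT, hper⟩ := hparry s ⟨hs, hs1⟩
  rcases periodic_or_exists_ne_of_eventually_periodic hper with hper | ⟨M, hne, hper⟩
  · obtain ⟨j, hj, htail⟩ := exists_digit_eq_zero_one_le_tail h1 h2 hs hs1 hT hper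
    obtain ⟨t, ht, hts, htj⟩ := exists_expansionValue_eq_of_digit_eq_zero h1 h2.le hs hj htail
    have := congrFun (huniq t ⟨ht, hts.trans hs1⟩) j
    omega
  · obtain ⟨Q, hQ, hQ0⟩ := exists_aeval_eq_zero_coeff_zero_eq_sub h1 hs hs1 hT hper
    have hQ0_unit : IsUnit (Q.coeff 0) := by
      have := hs M
      have := hs (M + T)
      rw [hQ0, Int.isUnit_iff]
      omega
    exact Int.isUnit_iff.1 (isUnit_coeff_zero_minpoly_of_aeval_eq_zero hint hQ hQ0_unit)
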